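/- arXiv:1903.04342 — 4 statements merged into one kernel-verified Lean document; each statement's English description precedes it below -/
import Mathlib

section
/- An integer vector (x_1, ..., x_{m-1}) gives the Kunz coordinates of a numerical semigroup with multiplicity m if and only if: x_i ≥ 1 for all i; x_i + x_j ≥ x_{i+j} whenever 1 ≤ i ≤ j ≤ m-1 and i + j < m; and x_i + x_j + 1 ≥ x_{i+j-m} whenever 1 ≤ i ≤ j ≤ m-1 and i + j > m. -/
/-- A numerical semigroup: a cofinite additive submonoid of ℕ. -/
structure NumSgp where
  carrier : Set ℕ
  zero_mem : 0 ∈ carrier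
  add_mem : ∀ ⦃a b : ℕ⦄, a ∈ carrier → b ∈ carrier → a + b ∈ carrier
  cofinite : (carrierᶜ : Set ℕ).Finite

namespace NumSgp

/-- Multiplicity: smallest nonzero element. -/
noncomputable def mult (S : NumSgp) : ℕ := sInf {n | n ∈ S.carrier ∧ n ≠ 0}

/-- Conductor: least `c` with `c + ℕ ⊆ S`. -/
noncomputable def conductor (S : NumSgp) : ℕ := sInf {c | ∀ n, c ≤ n → n ∈ S.carrier}

/-- Number of sporadic elements: elements of `S` below the conductor. -/
noncomputable def nnum (S : NumSgp) : ℕ := (S.carrier ∩ Set.Iio S.conductor).ncard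

/-- An atom (minimal generator): a nonzero element not a sum of two nonzero elements. -/
def IsAtomOf (S : NumSgp) (a : ℕ) : Prop :=
  a ∈ S.carrier ∧ a ≠ 0 ∧
    ¬∃ b ∈ S.carrier, ∃ c ∈ S.carrier, b ≠ 0 ∧ c ≠ 0 ∧ a = b + c

/-- Embedding dimension: number of atoms. -/
noncomputable def edim (S : NumSgp) : ℕ := {a | S.IsAtomOf a}.ncard

/-- Pseudo-Frobenius number: a gap `f` with `f + s ∈ S` for all nonzero `s ∈ S`. -/
def IsPF (S : NumSgp) (f : ℕ) : Prop :=
  f ∉ S.carrier ∧ ∀ s ∈ S.carrier, s ≠ 0 → f + s ∈ S.carrier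

/-- Type: number of pseudo-Frobenius numbers. -/
noncomputable def type (S : NumSgp) : ℕ := {f | S.IsPF f}.ncard

/-- Genus: number of gaps. -/
noncomputable def genus (S : NumSgp) : ℕ := (S.carrierᶜ : Set ℕ).ncard

/-- Frobenius number: the largest gap. -/
noncomputable def frob (S : NumSgp) : ℕ := sSup (S.carrierᶜ : Set ℕ)

/-- `apMin S m i` is the least element of `S` congruent to `i` mod `m`. -/
noncomputable def apMin (S : NumSgp) (m i : ℕ) : ℕ := sInf {s | s ∈ S.carrier ∧ s % m = i}

/-- Wilf's inequality. -/
def Wilf (S : NumSgp) : Prop := S.conductor ≤ S.edim * S.nnum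

/-- The Apéry poset relation: `i ⪯ j` iff `a_j - a_i ∈ S`. -/
def krel (S : NumSgp) (m i j : ℕ) : Prop :=
  ∃ s ∈ S.carrier, S.apMin m i + s = S.apMin m j

/-- `x` is the vector of Kunz coordinates of `S` with respect to `m`. -/
def KunzCoords (S : NumSgp) (m : ℕ) (x : ℕ → ℤ) : Prop :=
  ∀ i, 1 ≤ i → i < m → (S.apMin m i : ℤ) = x i * m + i

end NumSgp

open NumSgp

/-- The set `{s ∈ S, s % m = i}` is nonempty (for `i < m`, `0 < m`). -/
lemma apSet_nonempty (S : NumSgp) (m i : ℕ) (hm : 0 < m) (hi : i < m) :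
    {s | s ∈ S.carrier ∧ s % m = i}.Nonempty := by
  obtain ⟨B, hB⟩ := S.cofinite.bddAbove
  refine ⟨(B + 1) * m + i, ?_, ?_⟩
  · by_contra h
    have hmem : (B + 1) * m + i ∈ (S.carrierᶜ : Set ℕ) := h
    have hle := hB hmem
    have : B + 1 ≤ (B + 1) * m := Nat.le_mul_of_pos_right _ hm
    omega
  · rw [Nat.mul_comm, Nat.mul_add_mod]
    exact Nat.mod_eq_of_lt hi

lemma apMin_mem (S : NumSgp) (m i : ℕ) (hm : 0 < m) (hi : i < m) :
    S.apMin m i ∈ S.carrier ∧ S.apMin m i % m = i :=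
  Nat.sInf_mem (apSet_nonempty S m i hm hi)

/-- Forward direction helper: the multiplicity bounds every nonzero element. -/
lemma mult_le (S : NumSgp) {n : ℕ} (hn : n ∈ S.carrier) (hn0 : n ≠ 0) :
    S.mult ≤ n := Nat.sInf_le ⟨hn, hn0⟩

open NumSgp in
theorem kunz_coordinates_characterization (m : ℕ) (hm : 2 ≤ m) (x : ℕ → ℤ) :
    (∃ S : NumSgp, S.mult = m ∧ S.KunzCoords m x) ↔
      ((∀ i, 1 ≤ i → i < m → 1 ≤ x i) ∧
       (∀ i j, 1 ≤ i → i ≤ j → j < m → i + j < m → x (i + j) ≤ x i + x j) ∧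
       (∀ i j, 1 ≤ i → i ≤ j → j < m → m < i + j → x (i + j - m) ≤ x i + x j + 1)) := by
  have hm0 : 0 < m := by omega
  have hmZ : (0 : ℤ) < (m : ℤ) := by exact_mod_cast hm0
  constructor
  · rintro ⟨S, hmult, hK⟩
    -- basic facts about apMin
    have hap : ∀ i, 1 ≤ i → i < m →
        S.apMin m i ∈ S.carrier ∧ S.apMin m i % m = i ∧ m ≤ S.apMin m i := by
      intro i h1 h2
      obtain ⟨hmem, hmod⟩ := apMin_mem S m i hm0 h2
      refine ⟨hmem, hmod, ?_⟩
      have hne : S.apMin m i ≠ 0 := by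
        intro h; rw [h] at hmod; simp at hmod; omega
      have := mult_le S hmem hne
      omega
    have hx1 : ∀ i, 1 ≤ i → i < m → 1 ≤ x i := by
      intro i h1 h2
      obtain ⟨_, _, hge⟩ := hap i h1 h2
      have hco := hK i h1 h2
      have : (m : ℤ) ≤ (S.apMin m i : ℤ) := by exact_mod_cast hge
      rw [hco] at this
      have hiZ : (i : ℤ) < (m : ℤ) := by exact_mod_cast h2
      nlinarith
    refine ⟨hx1, ?_, ?_⟩
    · intro i j h1 hij hjm hsum
      have h1j : 1 ≤ j := le_trans h1 hij
      obtain ⟨hmi, hri, _⟩ := hap i h1 (by omega)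
      obtain ⟨hmj, hrj, _⟩ := hap j h1j hjm
      have hadd : S.apMin m i + S.apMin m j ∈ S.carrier := S.add_mem hmi hmj
      have hmod : (S.apMin m i + S.apMin m j) % m = i + j := by
        rw [Nat.add_mod, hri, hrj]
        exact Nat.mod_eq_of_lt hsum
      have hle : S.apMin m (i + j) ≤ S.apMin m i + S.apMin m j :=
        Nat.sInf_le ⟨hadd, hmod⟩
      have hleZ : (S.apMin m (i + j) : ℤ) ≤ (S.apMin m i : ℤ) + (S.apMin m j : ℤ) := by
        exact_mod_cast hle
      rw [hK i h1 (by omega), hK j h1j hjm, hK (i + j) (by omega) hsum] at hleZ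
      push_cast at hleZ
      nlinarith
    · intro i j h1 hij hjm hover
      have h1j : 1 ≤ j := le_trans h1 hij
      have him : i < m := by omega
      obtain ⟨hmi, hri, _⟩ := hap i h1 him
      obtain ⟨hmj, hrj, _⟩ := hap j h1j hjm
      have hadd : S.apMin m i + S.apMin m j ∈ S.carrier := S.add_mem hmi hmj
      have hmod : (S.apMin m i + S.apMin m j) % m = i + j - m := by
        rw [Nat.add_mod, hri, hrj]
        have h2m : i + j < 2 * m := by omega
        have : (i + j) % m = i + j - m := by
          rw [Nat.mod_eq_sub_mod (by omega)]
          exact Nat.mod_eq_of_lt (by omega)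
        exact this
      have hle : S.apMin m (i + j - m) ≤ S.apMin m i + S.apMin m j :=
        Nat.sInf_le ⟨hadd, hmod⟩
      have hleZ : (S.apMin m (i + j - m) : ℤ) ≤ (S.apMin m i : ℤ) + (S.apMin m j : ℤ) := by
        exact_mod_cast hle
      rw [hK i h1 him, hK j h1j hjm, hK (i + j - m) (by omega) (by omega)] at hleZ
      have hcast : ((i + j - m : ℕ) : ℤ) = (i : ℤ) + j - m := by
        have : m ≤ i + j := by omega
        push_cast [Nat.cast_sub this]
        ring
      rw [hcast] at hleZ
      nlinarith
  · rintro ⟨h1, h2, h3⟩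
    -- symmetric versions
    have h2' : ∀ i j, 1 ≤ i → i < m → 1 ≤ j → j < m → i + j < m →
        x (i + j) ≤ x i + x j := by
      intro i j hi1 him hj1 hjm hs
      rcases le_total i j with h | h
      · exact h2 i j hi1 h hjm hs
      · have := h2 j i hj1 h him (by omega)
        rw [add_comm j i] at this
        linarith
    have h3' : ∀ i j, 1 ≤ i → i < m → 1 ≤ j → j < m → m < i + j →
        x (i + j - m) ≤ x i + x j + 1 := by
      intro i j hi1 him hj1 hjm hs
      rcases le_total i j with h | h
      · exact h3 i j hi1 h hjm hs
      · have := h3 j i hj1 h him (by omega)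
        rw [add_comm j i] at this
        linarith
    -- the carrier
    set C : Set ℕ := {n | n % m = 0 ∨ x (n % m) * m + ((n % m : ℕ) : ℤ) ≤ (n : ℤ)} with hC
    have hmemC : ∀ n : ℕ, n ∈ C ↔
        (n % m = 0 ∨ x (n % m) * m + ((n % m : ℕ) : ℤ) ≤ (n : ℤ)) := fun n => Iff.rfl
    have hadd : ∀ ⦃a b : ℕ⦄, a ∈ C → b ∈ C → a + b ∈ C := by
      intro a b ha hb
      rw [hmemC] at ha hb ⊢
      have hab : (a + b) % m = (a % m + b % m) % m := Nat.add_mod a b m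
      by_cases hi0 : a % m = 0
      · have hmod : (a + b) % m = b % m := by
          rw [hab, hi0, Nat.zero_add, Nat.mod_mod_of_dvd b (dvd_refl m)]
        rcases hb with hb0 | hb1
        · left; rw [hmod]; exact hb0
        · right; rw [hmod]
          have : (b : ℤ) ≤ (a + b : ℕ) := by push_cast; omega
          linarith
      · by_cases hj0 : b % m = 0
        · have hmod : (a + b) % m = a % m := by
            rw [hab, hj0, Nat.add_zero, Nat.mod_mod_of_dvd a (dvd_refl m)]
          rcases ha with ha0 | ha1
          · left; rw [hmod]; exact ha0
          · right; rw [hmod]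
            have : (a : ℤ) ≤ (a + b : ℕ) := by push_cast; omega
            linarith
        · have ha1 := ha.resolve_left hi0
          have hb1 := hb.resolve_left hj0
          set i := a % m with hidef
          set j := b % m with hjdef
          have hi : i < m := Nat.mod_lt a hm0
          have hj : j < m := Nat.mod_lt b hm0
          have hi1 : 1 ≤ i := Nat.one_le_iff_ne_zero.mpr hi0
          have hj1 : 1 ≤ j := Nat.one_le_iff_ne_zero.mpr hj0
          rcases lt_trichotomy (i + j) m with hs | hs | hs
          · right
            have hmod : (a + b) % m = i + j := by
              rw [hab, Nat.mod_eq_of_lt hs]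
            rw [hmod]
            have hxij := h2' i j hi1 hi hj1 hj hs
            have hcab : ((a + b : ℕ) : ℤ) = (a : ℤ) + b := by push_cast; ring
            have hcij : ((i + j : ℕ) : ℤ) = (i : ℤ) + j := by push_cast; ring
            rw [hcab, hcij]
            nlinarith
          · left
            rw [hab, hs, Nat.mod_self]
          · right
            have hmod : (a + b) % m = i + j - m := by
              rw [hab, Nat.mod_eq_sub_mod (by omega), Nat.mod_eq_of_lt (by omega)]
            rw [hmod]
            have hxij := h3' i j hi1 hi hj1 hj hs
            have hcab : ((a + b : ℕ) : ℤ) = (a : ℤ) + b := by push_cast; ring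
            have hcij : ((i + j - m : ℕ) : ℤ) = (i : ℤ) + j - m := by
              have hle : m ≤ i + j := by omega
              push_cast [Nat.cast_sub hle]; ring
            rw [hcab, hcij]
            nlinarith
    -- cofiniteness
    have hcof : (Cᶜ : Set ℕ).Finite := by
      apply Set.Finite.subset (Set.finite_Iio ((Finset.range m).sup
        (fun i => (x i * m + i).toNat) + 1))
      intro n hn
      simp only [Set.mem_compl_iff, hmemC] at hn
      push_neg at hn
      obtain ⟨hn0, hn1⟩ := hn
      have hnm : n % m < m := Nat.mod_lt n hm0
      have hsup : (x (n % m) * m + (n % m : ℕ)).toNat ≤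
          (Finset.range m).sup (fun i => (x i * m + i).toNat) :=
        Finset.le_sup (f := fun i => (x i * m + i).toNat) (Finset.mem_range.mpr hnm)
      have hself : (x (n % m) * m + (n % m : ℕ) : ℤ) ≤
          ((x (n % m) * m + (n % m : ℕ)).toNat : ℤ) := Int.self_le_toNat _
      have hlt : (n : ℤ) < x (n % m) * m + (n % m : ℕ) := hn1
      have hfin : (n : ℤ) <
          ((((Finset.range m).sup (fun i => (x i * m + i).toNat)) : ℕ) : ℤ) := by
        calc (n : ℤ) < x (n % m) * m + (n % m : ℕ) := hlt
          _ ≤ ((x (n % m) * m + (n % m : ℕ)).toNat : ℤ) := hself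
          _ ≤ _ := by exact_mod_cast hsup
      simp only [Set.mem_Iio]
      omega
    -- zero membership
    have hzero : 0 ∈ C := by
      rw [hmemC]; left; exact Nat.zero_mod m
    set S : NumSgp := ⟨C, hzero, hadd, hcof⟩ with hS
    -- every nonzero element of C is at least m
    have hlower : ∀ n : ℕ, n ∈ C → n ≠ 0 → m ≤ n := by
      intro n hn hn0
      rw [hmemC] at hn
      by_cases hr : n % m = 0
      · exact Nat.le_of_dvd (Nat.pos_of_ne_zero hn0) (Nat.dvd_of_mod_eq_zero hr)
      · have h := hn.resolve_left hr
        have hnm : n % m < m := Nat.mod_lt n hm0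
        have hx := h1 (n % m) (Nat.one_le_iff_ne_zero.mpr hr) hnm
        have hrpos : (0 : ℤ) < ((n % m : ℕ) : ℤ) := by
          exact_mod_cast Nat.pos_of_ne_zero hr
        have hmm := mul_le_mul_of_nonneg_right hx hmZ.le
        have : (m : ℤ) ≤ (n : ℤ) := by nlinarith
        exact_mod_cast this
    have hmC : m ∈ C := by rw [hmemC]; left; exact Nat.mod_self m
    have hmultS : S.mult = m := by
      apply le_antisymm
      · exact Nat.sInf_le ⟨hmC, by omega⟩
      · have hne : {n | n ∈ S.carrier ∧ n ≠ 0}.Nonempty := ⟨m, hmC, by omega⟩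
        obtain ⟨hmem, hne0⟩ := Nat.sInf_mem hne
        exact hlower _ hmem hne0
    refine ⟨S, hmultS, ?_⟩
    intro i hi1 him
    have hx := h1 i hi1 him
    set a : ℕ := (x i * m + i).toNat with hadef
    have hxpos : (0 : ℤ) ≤ x i * m + i := by positivity
    have haZ : (a : ℤ) = x i * m + i := Int.toNat_of_nonneg hxpos
    have haMod : a % m = i := by
      have hmodZ : ((a % m : ℕ) : ℤ) = (i : ℤ) := by
        push_cast
        rw [haZ, add_comm (x i * (m : ℤ)) (i : ℤ), Int.add_mul_emod_self_right]
        exact Int.emod_eq_of_lt (by positivity) (by exact_mod_cast him)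
      exact_mod_cast hmodZ
    have haC : a ∈ C := by
      rw [hmemC, haMod]
      right
      rw [haZ]
    have hap : S.apMin m i = a := by
      apply le_antisymm
      · exact Nat.sInf_le ⟨haC, haMod⟩
      · have hne : {s | s ∈ S.carrier ∧ s % m = i}.Nonempty := ⟨a, haC, haMod⟩
        obtain ⟨hs, hsmod⟩ := Nat.sInf_mem hne
        rw [hmemC] at hs
        have hs' := hs.resolve_left (by rw [hsmod]; omega)
        rw [hsmod] at hs'
        have : (a : ℤ) ≤ (sInf {s | s ∈ S.carrier ∧ s % m = i} : ℕ) := by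
          rw [haZ]; exact hs'
        exact_mod_cast this
    rw [hap, haZ]
end

section
/- The point v = (-1/m, -2/m, ..., -(m-1)/m) satisfies every defining inequality of the relaxed Kunz polyhedron P'_m with equality, and consequently P'_m = {v} + C_m; moreover v is the unique vertex of P'_m. -/
/-- The relaxed Kunz polyhedron `P'_m`, embedded in `Fin m → ℝ` with the coordinate
indexed by `0` set to `0`. -/
def PmRelaxed (m : ℕ) [NeZero m] : Set (Fin m → ℝ) :=
  {x | x 0 = 0 ∧ ∀ i j : Fin m, i ≠ 0 → j ≠ 0 → i + j ≠ 0 →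
    x (i + j) ≤ x i + x j + (if m < (i : ℕ) + (j : ℕ) then 1 else 0)}

/-- The Kunz cone `C_m`. -/
def KunzCone (m : ℕ) [NeZero m] : Set (Fin m → ℝ) :=
  {x | x 0 = 0 ∧ ∀ i j : Fin m, i ≠ 0 → j ≠ 0 → i + j ≠ 0 → x (i + j) ≤ x i + x j}

/-- The special point `v = (-1/m, -2/m, …, -(m-1)/m)`. -/
noncomputable def vKunz (m : ℕ) [NeZero m] : Fin m → ℝ := fun i => -((i : ℕ) : ℝ) / m

lemma vKunz_zero (m : ℕ) [NeZero m] : vKunz m 0 = 0 := by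
  simp [vKunz]

lemma vKunz_eq (m : ℕ) [NeZero m] (i j : Fin m) (hij : i + j ≠ 0) :
    vKunz m i + vKunz m j + (if m < (i : ℕ) + (j : ℕ) then (1 : ℝ) else 0) = vKunz m (i + j) := by
  have hm0 : (m : ℝ) ≠ 0 := Nat.cast_ne_zero.mpr (NeZero.ne m)
  have hv : ((i + j : Fin m) : ℕ) = ((i : ℕ) + (j : ℕ)) % m := Fin.val_add i j
  have hi := i.isLt
  have hj := j.isLt
  rcases lt_or_ge ((i : ℕ) + (j : ℕ)) m with h | h
  · rw [if_neg (by omega)]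
    unfold vKunz
    rw [hv, Nat.mod_eq_of_lt h]
    push_cast
    ring
  · have hne : (i : ℕ) + (j : ℕ) ≠ m := by
      intro hc
      apply hij
      apply Fin.ext
      simp [hv, hc]
    have hmod : ((i : ℕ) + (j : ℕ)) % m = (i : ℕ) + (j : ℕ) - m := by
      rw [Nat.mod_eq_sub_mod h, Nat.mod_eq_of_lt (by omega)]
    rw [if_pos (by omega)]
    unfold vKunz
    rw [hv, hmod]
    rw [Nat.cast_sub h]
    push_cast
    field_simp
    ring

lemma mem_shift (m : ℕ) [NeZero m] (x : Fin m → ℝ) :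
    x ∈ PmRelaxed m ↔ x - vKunz m ∈ KunzCone m := by
  constructor
  · rintro ⟨h0, h⟩
    refine ⟨by simp [h0, vKunz_zero], fun i j hi hj hij => ?_⟩
    have := h i j hi hj hij
    have hv := vKunz_eq m i j hij
    simp only [Pi.sub_apply]
    linarith
  · rintro ⟨h0, h⟩
    have h0' : x 0 = 0 := by
      have := h0
      simp only [Pi.sub_apply, vKunz_zero] at this
      linarith
    refine ⟨h0', fun i j hi hj hij => ?_⟩
    have := h i j hi hj hij
    have hv := vKunz_eq m i j hij
    simp only [Pi.sub_apply] at this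
    linarith

lemma kunz_smul (m : ℕ) [NeZero m] {c : ℝ} (hc : 0 ≤ c) {x : Fin m → ℝ}
    (hx : x ∈ KunzCone m) : c • x ∈ KunzCone m := by
  refine ⟨by simp [hx.1], fun i j hi hj hij => ?_⟩
  have := hx.2 i j hi hj hij
  simp only [Pi.smul_apply, smul_eq_mul]
  nlinarith

lemma kunz_pointed (m : ℕ) [NeZero m] (hm : 3 ≤ m) {x : Fin m → ℝ}
    (hx : x ∈ KunzCone m) (hnx : -x ∈ KunzCone m) : x = 0 := by
  have heq : ∀ i j : Fin m, i ≠ 0 → j ≠ 0 → i + j ≠ 0 → x (i + j) = x i + x j := by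
    intro i j hi hj hij
    have h1 := hx.2 i j hi hj hij
    have h2 := hnx.2 i j hi hj hij
    simp only [Pi.neg_apply] at h2
    linarith
  set e1 : Fin m := ⟨1, by omega⟩ with he1
  have key : ∀ k : ℕ, ∀ h1 : 1 ≤ k, ∀ h2 : k < m, x ⟨k, h2⟩ = k * x e1 := by
    intro k
    induction k with
    | zero => omega
    | succ n ih =>
      intro h1 h2
      rcases Nat.eq_or_lt_of_le h1 with h | h
      · simp [← h, e1]
      · have hn1 : 1 ≤ n := by omega
        have hn2 : n < m := by omega
        have hadd : (⟨n + 1, h2⟩ : Fin m) = ⟨n, hn2⟩ + e1 := by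
          apply Fin.ext
          simp [Fin.val_add, e1, Nat.mod_eq_of_lt h2]
        have := heq ⟨n, hn2⟩ e1 (by simp [Fin.ext_iff, e1]; omega) (by simp [Fin.ext_iff, e1])
          (by rw [← hadd]; simp [Fin.ext_iff])
        rw [hadd, this, ih hn1 hn2]
        push_cast
        ring
  have h2m : 2 < m := by omega
  have hm1 : m - 1 < m := by omega
  have hsum : (⟨2, h2m⟩ : Fin m) + ⟨m - 1, hm1⟩ = e1 := by
    apply Fin.ext
    simp only [Fin.val_add, e1]
    have : 2 + (m - 1) = m + 1 := by omega
    rw [this, Nat.add_mod_left, Nat.mod_eq_of_lt (by omega)]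
  have hkey := heq ⟨2, h2m⟩ ⟨m - 1, hm1⟩ (by simp [Fin.ext_iff]) (by simp [Fin.ext_iff]; omega)
    (by rw [hsum]; simp [Fin.ext_iff, e1])
  rw [hsum] at hkey
  rw [key 2 (by omega) h2m, key (m - 1) (by omega) hm1] at hkey
  have he1' : x e1 = 1 * x e1 := by
    have := key 1 le_rfl (by omega)
    rw [one_mul]
  have hcast : ((m - 1 : ℕ) : ℝ) = (m : ℝ) - 1 := by
    rw [Nat.cast_sub (by omega)]; simp
  rw [hcast] at hkey
  have hm0 : (m : ℝ) ≠ 0 := Nat.cast_ne_zero.mpr (NeZero.ne m)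
  have hmR : (3 : ℝ) ≤ (m : ℝ) := by exact_mod_cast hm
  have hx1 : x e1 = 0 := by nlinarith
  funext i
  rcases Nat.eq_zero_or_pos (i : ℕ) with h | h
  · have : i = 0 := Fin.ext (by simpa using h)
    rw [this, hx.1]; rfl
  · have := key (i : ℕ) h i.isLt
    simp only [Fin.eta] at this
    rw [this, hx1]
    simp

lemma kunz_extreme (m : ℕ) [NeZero m] (hm : 3 ≤ m) :
    Set.extremePoints ℝ (KunzCone m) = {0} := by
  have h0 : (0 : Fin m → ℝ) ∈ KunzCone m := ⟨rfl, fun i j _ _ _ => by simp⟩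
  ext x
  simp only [Set.mem_singleton_iff, mem_extremePoints]
  constructor
  · rintro ⟨hx, hext⟩
    by_contra hne
    have h1 : (1/2 : ℝ) • x ∈ KunzCone m := kunz_smul m (by norm_num) hx
    have h2 : (3/2 : ℝ) • x ∈ KunzCone m := kunz_smul m (by norm_num) hx
    have hseg : x ∈ openSegment ℝ ((1/2 : ℝ) • x) ((3/2 : ℝ) • x) := by
      refine ⟨1/2, 1/2, by norm_num, by norm_num, by norm_num, ?_⟩
      rw [smul_smul, smul_smul]
      norm_num
      rw [← add_smul]
      norm_num
    have := (hext _ h1 _ h2 hseg).1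
    apply hne
    have : (1/2 : ℝ) • x - x = 0 := by rw [this]; simp
    have h' : (-(1/2) : ℝ) • x = 0 := by
      rw [← this]; ext i; simp; ring
    have := smul_eq_zero.mp h'
    rcases this with h | h
    · norm_num at h
    · exact h
  · rintro rfl
    refine ⟨h0, fun x₁ hx₁ x₂ hx₂ hseg => ?_⟩
    obtain ⟨a, b, ha, hb, hab, hsum⟩ := hseg
    have hx2 : x₂ = (-(a/b)) • x₁ := by
      have hb' : b ≠ 0 := ne_of_gt hb
      ext i
      have := congrFun hsum i
      simp only [Pi.add_apply, Pi.smul_apply, smul_eq_mul, Pi.zero_apply] at this ⊢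
      field_simp
      linarith
    have hneg : -x₁ ∈ KunzCone m := by
      have : (b/a) • x₂ ∈ KunzCone m := kunz_smul m (le_of_lt (div_pos hb ha)) hx₂
      have heq : (b/a) • x₂ = -x₁ := by
        rw [hx2, smul_smul]
        have ha' : a ≠ 0 := ne_of_gt ha
        have hb' : b ≠ 0 := ne_of_gt hb
        ext i
        simp only [Pi.smul_apply, smul_eq_mul, Pi.neg_apply]
        field_simp
      rwa [heq] at this
    have h1 : x₁ = 0 := kunz_pointed m hm hx₁ hneg
    refine ⟨h1, ?_⟩
    rw [hx2, h1]
    simp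

theorem relaxed_kunz_vertex (m : ℕ) [NeZero m] (hm : 3 ≤ m) :
    (∀ i j : Fin m, i ≠ 0 → j ≠ 0 → i + j ≠ 0 →
      vKunz m i + vKunz m j + (if m < (i : ℕ) + (j : ℕ) then (1 : ℝ) else 0) =
        vKunz m (i + j)) ∧
    PmRelaxed m = (fun x => vKunz m + x) '' KunzCone m ∧
    Set.extremePoints ℝ (PmRelaxed m) = {vKunz m} := by
  have himg : PmRelaxed m = (fun x => vKunz m + x) '' KunzCone m := by
    ext x
    rw [mem_shift]
    constructor
    · intro h
      exact ⟨x - vKunz m, h, by ext i; simp⟩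
    · rintro ⟨y, hy, rfl⟩
      convert hy using 1
      ext i; simp
  refine ⟨fun i j _ _ hij => vKunz_eq m i j hij, himg, ?_⟩
  rw [himg]
  have htrans : Set.extremePoints ℝ ((fun x => vKunz m + x) '' KunzCone m) =
      (fun x => vKunz m + x) '' Set.extremePoints ℝ (KunzCone m) := by
    ext x
    simp only [Set.mem_image, mem_extremePoints]
    constructor
    · rintro ⟨⟨y, hy, rfl⟩, hext⟩
      refine ⟨y, ⟨hy, fun y₁ hy₁ y₂ hy₂ hseg => ?_⟩, rfl⟩
      have h := hext _ ⟨y₁, hy₁, rfl⟩ _ ⟨y₂, hy₂, rfl⟩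
        ((mem_openSegment_translate ℝ (vKunz m)).mpr hseg)
      exact ⟨by have := h.1; exact add_left_cancel this, by have := h.2; exact add_left_cancel this⟩
    · rintro ⟨y, ⟨hy, hext⟩, rfl⟩
      refine ⟨⟨y, hy, rfl⟩, ?_⟩
      rintro x₁ ⟨y₁, hy₁, rfl⟩ x₂ ⟨y₂, hy₂, rfl⟩ hseg
      have h := hext _ hy₁ _ hy₂ ((mem_openSegment_translate ℝ (vKunz m)).mp hseg)
      exact ⟨by rw [h.1], by rw [h.2]⟩
  rw [htrans, kunz_extreme m hm]
  simp
end

section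
/- The Apéry poset of any numerical semigroup S of multiplicity m is an m-Kunz poset: for distinct nonzero residues i, j modulo m, if i ⪯ j then j - i ⪯ j. -/
lemma NumSgp.mul_mult_mem (S : NumSgp) {m : ℕ} (hmS : m ∈ S.carrier) (k : ℕ) :
    k * m ∈ S.carrier := by
  induction k with
  | zero => simpa using S.zero_mem
  | succ n ih => rw [Nat.succ_mul]; exact S.add_mem ih hmS

open NumSgp in
theorem apery_poset_is_kunz (S : NumSgp) (m : ℕ) (hm : S.mult = m)
    (i j : ℕ) (hi1 : 1 ≤ i) (hi2 : i < m) (hj1 : 1 ≤ j) (hj2 : j < m)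
    (hij : i ≠ j) (h : S.krel m i j) : S.krel m ((j + m - i) % m) j := by
  obtain ⟨s, hs, hab⟩ := h
  obtain ⟨N, hN⟩ := S.cofinite.bddAbove
  have hmem : ∀ n, N < n → n ∈ S.carrier := by
    intro n hn
    by_contra hc
    exact absurd (hN hc) (by omega)
  have hm2 : 2 ≤ m := by omega
  have hmS : m ∈ S.carrier := by
    have hne : {n | n ∈ S.carrier ∧ n ≠ 0}.Nonempty :=
      ⟨N + 1, hmem _ (by omega), by omega⟩
    have h2 := Nat.sInf_mem hne
    rw [show sInf {n | n ∈ S.carrier ∧ n ≠ 0} = m from hm] at h2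
    exact h2.1
  have apProp : ∀ r, r < m → S.apMin m r ∈ S.carrier ∧ S.apMin m r % m = r := by
    intro r hr
    have hne : {t | t ∈ S.carrier ∧ t % m = r}.Nonempty :=
      ⟨m * (N + 1) + r, hmem _ (by nlinarith), by
        simp [Nat.mul_add_mod, Nat.mod_eq_of_lt hr]⟩
    exact Nat.sInf_mem hne
  obtain ⟨haS, haI⟩ := apProp i hi2
  obtain ⟨hbS, hbJ⟩ := apProp j hj2
  set a := S.apMin m i
  set b := S.apMin m j
  set r := (j + m - i) % m with hrdef
  have hrlt : r < m := Nat.mod_lt _ (by omega)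
  have h1 : (a + s) % m = j := by rw [hab]; exact hbJ
  have hsr : s % m = r := by
    have e1 : (i + s) % m = (a + s) % m := by
      conv_lhs => rw [← haI]
      rw [Nat.mod_add_mod]
    have e2 : (i + (j + m - i)) % m = j % m := by
      rw [show i + (j + m - i) = j + m from by omega, Nat.add_mod_right]
    have e3 : (i + s) % m = (i + (j + m - i)) % m := by
      rw [e1, h1, e2, Nat.mod_eq_of_lt hj2]
    have e4 : s ≡ (j + m - i) [MOD m] := Nat.ModEq.add_left_cancel' i e3
    rw [Nat.ModEq] at e4
    rw [e4, hrdef]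
  obtain ⟨hcS, hcR⟩ := apProp r hrlt
  set c := S.apMin m r
  have hcs : c ≤ s := Nat.sInf_le ⟨hs, hsr⟩
  have hdvd : m ∣ s - c := (Nat.modEq_iff_dvd' hcs).mp (by rw [Nat.ModEq, hcR, hsr])
  obtain ⟨k, hk⟩ := hdvd
  exact ⟨a + k * m, S.add_mem haS (S.mul_mult_mem hmS k), by
    have hkm : k * m = m * k := Nat.mul_comm k m
    omega⟩
end

section
/- Two numerical semigroups S and T of multiplicity m have equal Apéry posets if and only if their Kunz coordinate vectors satisfy exactly the same set of equalities among the defining inequalities of the Kunz polyhedron P_m: for i + j < m (resp. i + j > m), x_i + x_j = x_{i+j} (resp. x_i + x_j + 1 = x_{i+j-m}) holds for S iff i ⪯ i+j in P(S); hence the poset P(S) is determined by which defining inequalities are tight. -/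
namespace NumSgp

lemma exists_large (S : NumSgp) : ∃ N : ℕ, ∀ n, N ≤ n → n ∈ S.carrier := by
  obtain ⟨N, hN⟩ := S.cofinite.bddAbove
  refine ⟨N + 1, fun n hn => ?_⟩
  by_contra h
  have := hN (Set.mem_compl h)
  omega

lemma apMin_spec (S : NumSgp) {m i : ℕ} (hi : i < m) :
    S.apMin m i ∈ S.carrier ∧ S.apMin m i % m = i := by
  obtain ⟨N, hN⟩ := S.exists_large
  have hm : 0 < m := by omega
  have hmem : N * m + i ∈ {s | s ∈ S.carrier ∧ s % m = i} :=
    ⟨hN _ (le_trans (Nat.le_mul_of_pos_right N hm) (Nat.le_add_right _ _)),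
     by rw [Nat.mul_comm, Nat.mul_add_mod, Nat.mod_eq_of_lt hi]⟩
  exact Nat.sInf_mem ⟨_, hmem⟩

lemma krel_iff_apMin (S : NumSgp) {m i j k : ℕ} (hi : i < m) (hj : j < m) (hk : k < m)
    (hmod : (i + j) % m = k) :
    S.krel m i k ↔ S.apMin m i + S.apMin m j = S.apMin m k := by
  obtain ⟨ha, hai⟩ := S.apMin_spec hi
  obtain ⟨hb, hbj⟩ := S.apMin_spec hj
  obtain ⟨hc, hck⟩ := S.apMin_spec hk
  have hcle : S.apMin m k ≤ S.apMin m i + S.apMin m j :=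
    Nat.sInf_le ⟨S.add_mem ha hb, by rw [Nat.add_mod, hai, hbj]; exact hmod⟩
  constructor
  · rintro ⟨s, hs, heq⟩
    have e1 : (i + s) % m = (i + j) % m := by
      rw [hmod, Nat.add_mod i s, Nat.mod_eq_of_lt hi, ← hai, ← Nat.add_mod, heq, hck]
    have e2 : s ≡ j [MOD m] := Nat.ModEq.add_left_cancel' i e1
    have e3 : s % m = j := by
      have := e2
      unfold Nat.ModEq at this
      rw [this, Nat.mod_eq_of_lt hj]
    have hble : S.apMin m j ≤ s := Nat.sInf_le ⟨hs, e3⟩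
    omega
  · intro h
    exact ⟨S.apMin m j, hb, h⟩

lemma tight1 (S : NumSgp) {m : ℕ} (hm : 2 ≤ m) {x : ℕ → ℤ} (hx : S.KunzCoords m x)
    {i j : ℕ} (hi : 1 ≤ i) (hi' : i < m) (hj : 1 ≤ j) (hj' : j < m) (hij : i + j < m) :
    x i + x j = x (i + j) ↔ S.krel m i (i + j) := by
  have hmZ : (m : ℤ) ≠ 0 := by exact_mod_cast (by omega : m ≠ 0)
  rw [S.krel_iff_apMin hi' hj' hij (Nat.mod_eq_of_lt hij)]
  have A := hx i hi hi'
  have B := hx j hj hj'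
  have C := hx (i + j) (by omega) hij
  rw [← Nat.cast_inj (R := ℤ), Nat.cast_add, A, B, C]
  push_cast
  constructor
  · intro h
    linear_combination (m : ℤ) * h
  · intro h
    have h2 : (x i + x j) * (m : ℤ) = x (i + j) * m := by linear_combination h
    exact mul_right_cancel₀ hmZ h2

lemma tight2 (S : NumSgp) {m : ℕ} (hm : 2 ≤ m) {x : ℕ → ℤ} (hx : S.KunzCoords m x)
    {i j k : ℕ} (hi : 1 ≤ i) (hi' : i < m) (hj : 1 ≤ j) (hj' : j < m)
    (hk : 1 ≤ k) (hk' : k < m) (hijk : i + j = k + m) :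
    x i + x j + 1 = x k ↔ S.krel m i k := by
  have hmZ : (m : ℤ) ≠ 0 := by exact_mod_cast (by omega : m ≠ 0)
  have hmod : (i + j) % m = k := by
    rw [hijk, Nat.add_mod_right, Nat.mod_eq_of_lt hk']
  rw [S.krel_iff_apMin hi' hj' hk' hmod]
  have A := hx i hi hi'
  have B := hx j hj hj'
  have C := hx k hk hk'
  have hZ : (i : ℤ) + j = k + m := by exact_mod_cast hijk
  rw [← Nat.cast_inj (R := ℤ), Nat.cast_add, A, B, C]
  constructor
  · intro h
    linear_combination (m : ℤ) * h + hZ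
  · intro h
    have h2 : (x i + x j + 1) * (m : ℤ) = x k * m := by linear_combination h - hZ
    exact mul_right_cancel₀ hmZ h2

end NumSgp

open NumSgp in
theorem apery_poset_eq_iff_same_tight_inequalities (S T : NumSgp) (m : ℕ) (hm : 2 ≤ m)
    (hS : S.mult = m) (hT : T.mult = m)
    (x y : ℕ → ℤ) (hx : S.KunzCoords m x) (hy : T.KunzCoords m y) :
    ((∀ i j, 1 ≤ i → i < m → 1 ≤ j → j < m → i + j < m →
        (x i + x j = x (i + j) ↔ S.krel m i (i + j))) ∧
     (∀ i j, 1 ≤ i → i < m → 1 ≤ j → j < m → m < i + j →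
        (x i + x j + 1 = x (i + j - m) ↔ S.krel m i (i + j - m)))) ∧
    ((∀ i j, 1 ≤ i → i < m → 1 ≤ j → j < m → (S.krel m i j ↔ T.krel m i j)) ↔
      ((∀ i j, 1 ≤ i → i < m → 1 ≤ j → j < m → i + j < m →
          (x i + x j = x (i + j) ↔ y i + y j = y (i + j))) ∧
       (∀ i j, 1 ≤ i → i < m → 1 ≤ j → j < m → m < i + j →
          (x i + x j + 1 = x (i + j - m) ↔ y i + y j + 1 = y (i + j - m))))) := by
  refine ⟨⟨fun i j hi hi' hj hj' hij => S.tight1 hm hx hi hi' hj hj' hij,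
    fun i j hi hi' hj hj' hij =>
      S.tight2 hm hx hi hi' hj hj' (show 1 ≤ i + j - m by omega)
        (show i + j - m < m by omega) (show i + j = (i + j - m) + m by omega)⟩, ?_⟩
  constructor
  · intro hkr
    constructor
    · intro i j hi hi' hj hj' hij
      rw [S.tight1 hm hx hi hi' hj hj' hij, T.tight1 hm hy hi hi' hj hj' hij]
      exact hkr i (i + j) hi hi' (by omega) hij
    · intro i j hi hi' hj hj' hij
      rw [S.tight2 hm hx hi hi' hj hj' (show 1 ≤ i + j - m by omega)
            (show i + j - m < m by omega) (show i + j = (i + j - m) + m by omega),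
          T.tight2 hm hy hi hi' hj hj' (show 1 ≤ i + j - m by omega)
            (show i + j - m < m by omega) (show i + j = (i + j - m) + m by omega)]
      exact hkr i (i + j - m) hi hi' (by omega) (by omega)
  · rintro ⟨h1, h2⟩ i j hi hi' hj hj'
    rcases lt_trichotomy i j with h | h | h
    · have hd : i + (j - i) = j := by omega
      rw [← hd,
        ← S.tight1 hm hx hi hi' (show 1 ≤ j - i by omega) (show j - i < m by omega)
            (show i + (j - i) < m by omega),
        ← T.tight1 hm hy hi hi' (show 1 ≤ j - i by omega) (show j - i < m by omega)
            (show i + (j - i) < m by omega)]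
      exact h1 i (j - i) hi hi' (by omega) (by omega) (by omega)
    · subst h
      constructor
      · intro _; exact ⟨0, T.zero_mem, rfl⟩
      · intro _; exact ⟨0, S.zero_mem, rfl⟩
    · rw [← S.tight2 hm hx hi hi' (show 1 ≤ m + j - i by omega)
            (show m + j - i < m by omega) hj hj' (show i + (m + j - i) = j + m by omega),
          ← T.tight2 hm hy hi hi' (show 1 ≤ m + j - i by omega)
            (show m + j - i < m by omega) hj hj' (show i + (m + j - i) = j + m by omega)]
      have h2' := h2 i (m + j - i) hi hi' (by omega) (by omega) (by omega)
      rw [show i + (m + j - i) - m = j by omega] at h2'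
      exact h2'
end
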